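/- arXiv:1610.02106 — 2 statements merged into one kernel-verified Lean document; each statement's English description precedes it below -/
import Mathlib

section
/- For the upwind finite volume scheme, if the time step satisfies the CFL condition Δt * ∑_{L} max(v_{KL}, 0) ≤ (1−ξ)·|K| for all cells K with ξ ∈ [0,1), and p_K^k ≥ 0 for all K, then p_K^{k+1} ≥ 0 for all K. Hence by induction nonnegativity of the initial data implies nonnegativity for all time steps. -/
open Finset in
theorem fvm_positivity_preserving
    {ι : Type*} [Fintype ι]
    (vol : ι → ℝ) (hvol : ∀ K, 0 < vol K)
    (v : ι → ι → ℝ) (hv_antisym : ∀ K L, v K L = -v L K)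
    (Δt : ℝ) (hΔt : 0 < Δt)
    (ξ : ℝ) (hξ0 : 0 ≤ ξ) (hξ1 : ξ < 1)
    (hCFL : ∀ K, Δt * ∑ L, max (v K L) 0 ≤ (1 - ξ) * vol K)
    (p : ι → ℝ) (hp : ∀ K, 0 ≤ p K) :
    ∀ K, 0 ≤ p K - (Δt / vol K) * ∑ L, v K L * (if 0 ≤ v K L then p K else p L) := by
  intro K
  have hS : ∑ L, v K L * (if 0 ≤ v K L then p K else p L)
      ≤ (∑ L, max (v K L) 0) * p K := by
    rw [Finset.sum_mul]
    apply Finset.sum_le_sum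
    intro L _
    by_cases h : 0 ≤ v K L
    · simp [h, max_eq_left h]
    · push_neg at h
      rw [if_neg (not_le.mpr h), max_eq_right h.le, zero_mul]
      exact mul_nonpos_of_nonpos_of_nonneg h.le (hp L)
  have hvK := hvol K
  have h1 : (Δt / vol K) * ∑ L, v K L * (if 0 ≤ v K L then p K else p L)
      ≤ (Δt / vol K) * ((∑ L, max (v K L) 0) * p K) :=
    mul_le_mul_of_nonneg_left hS (div_nonneg hΔt.le hvK.le)
  have h2 : (Δt / vol K) * ((∑ L, max (v K L) 0) * p K) ≤ (1 - ξ) * p K := by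
    have := hCFL K
    have hc : Δt / vol K * (∑ L, max (v K L) 0) ≤ 1 - ξ := by
      rw [div_mul_eq_mul_div, div_le_iff₀ hvK]
      linarith
    calc (Δt / vol K) * ((∑ L, max (v K L) 0) * p K)
        = (Δt / vol K * ∑ L, max (v K L) 0) * p K := by ring
      _ ≤ (1 - ξ) * p K := mul_le_mul_of_nonneg_right hc (hp K)
  have h3 : (1 - ξ) * p K ≤ p K := by nlinarith [hp K]
  linarith
end

section
/- If S is a stochastic matrix that is irreducible and aperiodic (primitive) on a finite index set, then there exists a unique probability row vector π (π i ≥ 0, ∑ π i = 1) with π·S = π. -/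
open Finset Matrix

private lemma pow_entry_nonneg {ι : Type*} [Fintype ι] [DecidableEq ι]
    (S : Matrix ι ι ℝ) (hS_nonneg : ∀ i j, 0 ≤ S i j) :
    ∀ m, ∀ i j, 0 ≤ (S ^ m) i j := by
  intro m
  induction m with
  | zero => intro i j; simp [Matrix.one_apply]; split <;> norm_num
  | succ m ih =>
      intro i j
      rw [pow_succ, Matrix.mul_apply]
      exact Finset.sum_nonneg fun k _ => mul_nonneg (ih i k) (hS_nonneg k j)

private lemma pow_rowsum {ι : Type*} [Fintype ι] [DecidableEq ι]
    (S : Matrix ι ι ℝ) (hS_rowsum : ∀ i, ∑ j, S i j = 1) :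
    ∀ m, ∀ i, ∑ j, (S ^ m) i j = 1 := by
  intro m
  induction m with
  | zero => intro i; simp [Matrix.one_apply]
  | succ m ih =>
      intro i
      rw [pow_succ]
      simp only [Matrix.mul_apply]
      rw [Finset.sum_comm]
      calc ∑ k, ∑ j, (S ^ m) i k * S k j
          = ∑ k, (S ^ m) i k * ∑ j, S k j := by
            simp [Finset.mul_sum]
        _ = 1 := by simp [hS_rowsum, ih i]

private lemma sign_dichotomy {ι : Type*} [Fintype ι] [Nonempty ι] [DecidableEq ι]
    (S : Matrix ι ι ℝ)
    (hS_nonneg : ∀ i j, 0 ≤ S i j)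
    (hS_rowsum : ∀ i, ∑ j, S i j = 1)
    (n : ℕ) (hpos : ∀ i j, 0 < (S ^ n) i j)
    (v : ι → ℝ) (hv : Matrix.vecMul v S = v) :
    (∀ i, 0 ≤ v i) ∨ (∀ i, v i ≤ 0) := by
  have hvn' : ∀ m, Matrix.vecMul v (S ^ m) = v := by
    intro m
    induction m with
    | zero => simp
    | succ m ih =>
        rw [pow_succ, ← Matrix.vecMul_vecMul, ih, hv]
  have hvn : Matrix.vecMul v (S ^ n) = v := hvn' n
  set T := S ^ n with hT
  have hTnn : ∀ i j, 0 ≤ T i j := pow_entry_nonneg S hS_nonneg n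
  have hTrs : ∀ i, ∑ j, T i j = 1 := pow_rowsum S hS_rowsum n
  have h1 : ∀ j, v j = ∑ i, v i * T i j := by
    intro j
    conv_lhs => rw [← hvn]
    simp [Matrix.vecMul, dotProduct]
  have hle : ∀ j, |v j| ≤ ∑ i, |v i| * T i j := by
    intro j
    rw [h1 j]
    calc |∑ i, v i * T i j| ≤ ∑ i, |v i * T i j| := Finset.abs_sum_le_sum_abs _ _
      _ = ∑ i, |v i| * T i j := by
          refine Finset.sum_congr rfl fun i _ => ?_
          rw [abs_mul, abs_of_nonneg (hTnn i j)]
  have hsum : ∑ j, ∑ i, |v i| * T i j = ∑ j, |v j| := by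
    rw [Finset.sum_comm]
    calc ∑ i, ∑ j, |v i| * T i j = ∑ i, |v i| * ∑ j, T i j := by simp [Finset.mul_sum]
      _ = ∑ i, |v i| := by simp [hTrs]
  have heq : ∀ j, |v j| = ∑ i, |v i| * T i j := by
    intro j
    by_contra hne
    have hlt : |v j| < ∑ i, |v i| * T i j := lt_of_le_of_ne (hle j) hne
    have : ∑ j, |v j| < ∑ j, ∑ i, |v i| * T i j :=
      Finset.sum_lt_sum (fun k _ => hle k) ⟨j, Finset.mem_univ j, hlt⟩
    rw [hsum] at this
    exact lt_irrefl _ this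
  by_contra hcon
  push_neg at hcon
  obtain ⟨⟨i₀, h₀⟩, ⟨i₁, h₁⟩⟩ := hcon
  -- v i₀ < 0 and 0 < v i₁
  have hi₀ : v i₀ < 0 := h₀
  have hi₁ : 0 < v i₁ := h₁
  set j := Classical.arbitrary ι with hj
  have hlt1 : ∑ i, v i * T i j < ∑ i, |v i| * T i j := by
    refine Finset.sum_lt_sum
      (fun i _ => mul_le_mul_of_nonneg_right (le_abs_self _) (hTnn i j)) ?_
    exact ⟨i₀, Finset.mem_univ i₀, by
      have : v i₀ < |v i₀| := lt_of_lt_of_le hi₀ (abs_nonneg _)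
      exact mul_lt_mul_of_pos_right this (hpos i₀ j)⟩
  have hlt2 : -(∑ i, v i * T i j) < ∑ i, |v i| * T i j := by
    rw [← Finset.sum_neg_distrib]
    refine Finset.sum_lt_sum
      (fun i _ => by
        rw [← neg_mul]
        exact mul_le_mul_of_nonneg_right (neg_le_abs _) (hTnn i j)) ?_
    exact ⟨i₁, Finset.mem_univ i₁, by
      rw [← neg_mul]
      have : -v i₁ < |v i₁| := lt_of_lt_of_le (by linarith) (abs_nonneg _)
      exact mul_lt_mul_of_pos_right this (hpos i₁ j)⟩
  have habs : |∑ i, v i * T i j| < ∑ i, |v i| * T i j :=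
    abs_lt.2 ⟨by linarith, hlt1⟩
  rw [← h1 j] at habs
  rw [heq j] at habs
  exact lt_irrefl _ habs

open Finset in
theorem primitive_stochastic_matrix_unique_stationary
    {ι : Type*} [Fintype ι] [Nonempty ι] [DecidableEq ι] (S : Matrix ι ι ℝ)
    (hS_nonneg : ∀ i j, 0 ≤ S i j)
    (hS_rowsum : ∀ i, ∑ j, S i j = 1)
    (hprim : ∃ n : ℕ, 1 ≤ n ∧ ∀ i j, 0 < (S ^ n) i j) :
    ∃! π : ι → ℝ, (∀ i, 0 ≤ π i) ∧ (∑ i, π i = 1) ∧ Matrix.vecMul π S = π := by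
  obtain ⟨n, hn1, hpos⟩ := hprim
  -- det (S - 1) = 0 since the all-ones vector is a right eigenvector
  have hdet : (S - 1).det = 0 := by
    rw [← Matrix.exists_mulVec_eq_zero_iff]
    refine ⟨fun _ => (1 : ℝ), ?_, ?_⟩
    · intro h
      have := congrFun h (Classical.arbitrary ι)
      simp at this
    · funext i
      simp [Matrix.sub_mulVec, Matrix.mulVec, dotProduct, Matrix.one_apply, hS_rowsum i]
  have hdetT : (Sᵀ - 1).det = 0 := by
    have : Sᵀ - 1 = (S - 1)ᵀ := by
      rw [Matrix.transpose_sub, Matrix.transpose_one]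
    rw [this, Matrix.det_transpose, hdet]
  obtain ⟨v, hv0, hveq⟩ := (Matrix.exists_mulVec_eq_zero_iff).2 hdetT
  have hvfix : Matrix.vecMul v S = v := by
    rw [Matrix.sub_mulVec, Matrix.one_mulVec, sub_eq_zero] at hveq
    rw [← Matrix.mulVec_transpose, hveq]
  -- Get a nonnegative fixed vector w
  have hdich := sign_dichotomy S hS_nonneg hS_rowsum n hpos v hvfix
  obtain ⟨w, hw0, hwnn, hwfix⟩ :
      ∃ w : ι → ℝ, w ≠ 0 ∧ (∀ i, 0 ≤ w i) ∧ Matrix.vecMul w S = w := by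
    rcases hdich with h | h
    · exact ⟨v, hv0, h, hvfix⟩
    · refine ⟨-v, by simpa using hv0, fun i => by simpa using neg_nonneg.2 (h i), ?_⟩
      rw [Matrix.neg_vecMul, hvfix]
  set s := ∑ i, w i with hs
  have hspos : 0 < s := by
    rcases (Finset.sum_nonneg (fun i _ => hwnn i)).lt_or_eq with h | h
    · exact h
    · exfalso
      apply hw0
      funext i
      exact (Finset.sum_eq_zero_iff_of_nonneg (fun i _ => hwnn i)).1 h.symm i (Finset.mem_univ i)
  set π : ι → ℝ := fun i => w i / s with hπ
  refine ⟨π, ⟨fun i => div_nonneg (hwnn i) hspos.le, ?_, ?_⟩, ?_⟩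
  · rw [hπ, ← Finset.sum_div, ← hs, div_self hspos.ne']
  · have : π = s⁻¹ • w := by
      funext i; simp [hπ, div_eq_inv_mul]
    rw [this, Matrix.smul_vecMul, hwfix]
  · rintro π' ⟨hp1, hp2, hp3⟩
    -- difference is a fixed vector with sum zero
    have hdfix : Matrix.vecMul (π' - π) S = π' - π := by
      rw [Matrix.sub_vecMul, hp3]
      congr 1
      have : π = s⁻¹ • w := by funext i; simp [hπ, div_eq_inv_mul]
      rw [this, Matrix.smul_vecMul, hwfix]
    have hdsum : ∑ i, (π' - π) i = 0 := by
      have hπsum : ∑ i, π i = 1 := by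
        rw [hπ]
        simp only
        rw [← Finset.sum_div, ← hs, div_self hspos.ne']
      simp only [Pi.sub_apply, Finset.sum_sub_distrib, hp2, hπsum, sub_self]
    have hd := sign_dichotomy S hS_nonneg hS_rowsum n hpos (π' - π) hdfix
    have hzero : ∀ i, (π' - π) i = 0 := by
      rcases hd with h | h
      · intro i
        exact (Finset.sum_eq_zero_iff_of_nonneg (fun i _ => h i)).1 hdsum i (Finset.mem_univ i)
      · intro i
        have h' : ∀ i ∈ Finset.univ, 0 ≤ (-(π' - π)) i := fun i _ => by
          simpa using neg_nonneg.2 (h i)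
        have : ∑ i, (-(π' - π)) i = 0 := by
          simp only [Pi.neg_apply, Finset.sum_neg_distrib, hdsum, neg_zero]
        have := (Finset.sum_eq_zero_iff_of_nonneg h').1 this i (Finset.mem_univ i)
        rw [Pi.neg_apply, neg_eq_zero] at this
        exact this
    funext i
    have := hzero i
    simp only [Pi.sub_apply, sub_eq_zero] at this
    exact this
end
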